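/- Let φ(z) = ((-1 - it + 2itz + (1 - it)z²)/(2z²), (-2i + 2t + it² - 2it²z + i(-2 + 2it + t²)z²)/(4z²), (t² - 2it - (2t² + 4)z + (t² + 2it)z²)/(4z²)) on ℂ \ {0}. Then φ satisfies φ₁² + φ₂² + φ₃² = 0, and the real part of ∮_γ φ dz along the unit circle γ is nonzero for every real t ≠ 0. -/
import Mathlib

open Complex

/-- First component of the isotropic curve of `P_t(C)^♯`. -/
noncomputable def phiP1 (t : ℝ) (z : ℂ) : ℂ :=
  (-1 - I * t + 2 * I * t * z + (1 - I * t) * z ^ 2) / (2 * z ^ 2)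

/-- Second component of the isotropic curve of `P_t(C)^♯`. -/
noncomputable def phiP2 (t : ℝ) (z : ℂ) : ℂ :=
  (-2 * I + 2 * t + I * t ^ 2 - 2 * I * t ^ 2 * z
    + I * (-2 + 2 * I * t + t ^ 2) * z ^ 2) / (4 * z ^ 2)

/-- Third component of the isotropic curve of `P_t(C)^♯`. -/
noncomputable def phiP3 (t : ℝ) (z : ℂ) : ℂ :=
  ((t : ℂ) ^ 2 - 2 * I * t - (2 * t ^ 2 + 4) * z + (t ^ 2 + 2 * I * t) * z ^ 2)
    / (4 * z ^ 2)

lemma my_circleIntegral_add {f g : ℂ → ℂ} {c : ℂ} {R : ℝ} (hf : CircleIntegrable f c R)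
    (hg : CircleIntegrable g c R) :
    (∮ z in C(c, R), (f z + g z)) = (∮ z in C(c, R), f z) + ∮ z in C(c, R), g z := by
  simp only [circleIntegral, smul_add, intervalIntegral.integral_add hf.out hg.out]

lemma my_circleIntegrable_add {f g : ℂ → ℂ} {c : ℂ} {R : ℝ} (hf : CircleIntegrable f c R)
    (hg : CircleIntegrable g c R) : CircleIntegrable (fun z => f z + g z) c R := by
  unfold CircleIntegrable at *
  exact hf.add hg

lemma circleIntegrable_mul_zpow (a : ℂ) (n : ℤ) :
    CircleIntegrable (fun z : ℂ => a * (z - 0) ^ n) 0 1 := by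
  have h : CircleIntegrable (fun z : ℂ => (z - 0) ^ n) 0 1 :=
    circleIntegrable_sub_zpow_iff.2 (Or.inr (Or.inr (by norm_num)))
  unfold CircleIntegrable at *
  exact h.const_mul a

lemma key1 (t : ℝ) : (∮ z in C(0, 1), phiP1 t z) = 2 * Real.pi * I * (I * t) := by
  have hcongr : Set.EqOn (phiP1 t)
      (fun z : ℂ => ((-1 - I*t)/2) * (z - 0) ^ (-2:ℤ)
        + ((I*t) * (z - 0) ^ (-1:ℤ) + ((1 - I*t)/2) * (z - 0) ^ (0:ℤ)))
      (Metric.sphere (0:ℂ) 1) := by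
    intro z hz
    have hz0 : z ≠ 0 := by
      intro h; simp [h] at hz
    simp only [phiP1, sub_zero, zpow_neg, zpow_ofNat, zpow_zero, zpow_one]
    field_simp
    ring
  rw [circleIntegral.integral_congr zero_le_one hcongr,
    my_circleIntegral_add (circleIntegrable_mul_zpow _ _)
      (my_circleIntegrable_add (circleIntegrable_mul_zpow (I*t) (-1)) (circleIntegrable_mul_zpow _ 0)),
    my_circleIntegral_add (circleIntegrable_mul_zpow _ _) (circleIntegrable_mul_zpow _ _),
    circleIntegral.integral_const_mul, circleIntegral.integral_const_mul,
    circleIntegral.integral_const_mul,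
    circleIntegral.integral_sub_zpow_of_ne (by decide : (-2:ℤ) ≠ -1),
    circleIntegral.integral_sub_zpow_of_ne (by decide : (0:ℤ) ≠ -1)]
  have : (∮ z in C(0,1), (z - (0:ℂ)) ^ (-1:ℤ)) = 2 * Real.pi * I := by
    simp only [zpow_neg_one]
    exact circleIntegral.integral_sub_inv_of_mem_ball (by simp)
  rw [this]
  ring

/-- The isotropic curve of `P_t(C)^♯` satisfies the Euclidean isotropy relation
on `ℂ \ {0}`, and for every real `t ≠ 0` its period along the unit circle has
nonzero real part (the surface is singly periodic). -/
theorem dual_elliptic_catenoid_parabolic_periods (t : ℝ) :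
    (∀ z : ℂ, z ≠ 0 →
        phiP1 t z ^ 2 + phiP2 t z ^ 2 + phiP3 t z ^ 2 = 0) ∧
    (t ≠ 0 →
      ¬((∮ z in C(0, 1), phiP1 t z).re = 0 ∧
        (∮ z in C(0, 1), phiP2 t z).re = 0 ∧
        (∮ z in C(0, 1), phiP3 t z).re = 0)) := by
  constructor
  · intro z hz
    simp only [phiP1, phiP2, phiP3]
    have hz2 : (2 : ℂ) * z ^ 2 ≠ 0 := by
      simp [hz]
    have hz4 : (4 : ℂ) * z ^ 2 ≠ 0 := by
      simp [hz]
    field_simp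
    ring_nf
    simp only [show (I:ℂ) ^ 4 = 1 from by rw [show (4:ℕ)=2*2 from rfl, pow_mul, I_sq]; ring,
      show (I:ℂ) ^ 3 = -I from by rw [pow_succ, I_sq]; ring, I_sq]
    ring
  · intro ht h
    have h1 := h.1
    rw [key1 t] at h1
    have : (2 * (Real.pi:ℂ) * I * (I * t)).re = -(2 * Real.pi * t) := by
      simp
    rw [this] at h1
    have h2 : Real.pi * t = 0 := by linarith
    rcases mul_eq_zero.1 h2 with h3 | h3
    · exact Real.pi_ne_zero h3
    · exact ht h3
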